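/- arXiv:1610.01401 — 2 statements merged into one kernel-verified Lean document; each statement's English description precedes it below -/
import Mathlib

section
/- Let d ≥ 1 be an integer and let g be an ℕ₀-valued random variable with subexponential density on the lattice dℕ. Let (f, h) be a random vector of non-negative integers with finite exponential moments, such that h is almost surely divisible by d, and let (g_i)_{i≥1} be independent copies of g, independent of (f, h). Then there exist a summable sequence (C_k)_{k≥0} of non-negative reals and an integer n₀ such that for every k ≥ 0 and every n ≥ n₀ with d | n, ℙ(Σ_{i=1}^k g_i + h = n and f = k) ≤ C_k·ℙ(g = n). -/
/-!
Write `P_k = p^{*k}` for the law of `g₁ + ⋯ + g_k`. Conditioning on `(f, h)`, the probability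
in question is `∑_m ℙ(f = k, h = m) P_k(n - m)`.

Kesten's bound gives `P_k(n) ≤ K (1 + ε)^k p(n)` for all large `n ∈ dℕ`. Split
`P_{k+1} = p * P_k` at a fixed window `w`: on `n - j ≥ w` the bound for `P_k` applies, and since
`p * p ~ 2p` while the window part of `p * p` alone is `~ p`, this costs only a factor `1 + ε/2`;
the window part costs an additive constant because `p(n - i) ~ p(n)` for `i < w`.

For `n - m` large, Kesten's bound and `p(n - m) ≤ (1 + δ)^m p(n)` bound the terms by
`K (1 + δ)^(k + m) ℙ(f = k, h = m) p(n)`. For the finitely many `m > n - w`, the exponential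
moment makes `ℙ(f = k, h = m)` at most of order `(1 + δ)^(-n)`, while `p(n) ≳ (1 + δ)^(-n)`.
Both bounds are multiples of `𝔼[(1 + δ)^(f + h); f = k]`, which is summable in `k`.
-/

/-- A power series with coefficient sequence `g`, non-negative coefficients and radius of
convergence `ρ ∈ (0,∞)`, belongs to the class `𝒮_d`. -/
def SubexpClass (d : ℕ) (g : ℕ → ℝ) (ρ : ℝ) : Prop :=
  1 ≤ d ∧ 0 < ρ ∧ (∀ n, 0 ≤ g n) ∧
  (∀ n, ¬ d ∣ n → g n = 0) ∧
  (∃ N, ∀ n, N ≤ n → d ∣ n → 0 < g n) ∧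
  Summable (fun n => g n * ρ ^ n) ∧
  (∀ r : ℝ, ρ < r → ¬ Summable (fun n => g n * r ^ n)) ∧
  Filter.Tendsto (fun m => g (d * m) / g (d * m + d)) Filter.atTop (nhds (ρ ^ d)) ∧
  Filter.Tendsto
    (fun m => (∑ i ∈ Finset.range (d * m + 1), g i * g (d * m - i)) / g (d * m))
    Filter.atTop (nhds (2 * ∑' n, g n * ρ ^ n))

open MeasureTheory ProbabilityTheory Filter Finset Topology

noncomputable def convPow (p : ℕ → ℝ) : ℕ → ℕ → ℝ
  | 0, n => if n = 0 then 1 else 0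
  | k + 1, n => ∑ j ∈ range (n + 1), p j * convPow p k (n - j)

lemma sum_range_succ_eq_add_sum_reflect (F : ℕ → ℝ) {w n : ℕ} (hw : w ≤ n + 1) :
    ∑ j ∈ range (n + 1), F j
      = ∑ j ∈ range (n + 1 - w), F j + ∑ i ∈ range w, F (n - i) := by
  conv_lhs => rw [show n + 1 = (n + 1 - w) + w by omega, sum_range_add]
  rw [← sum_range_reflect (fun i => F (n - i))]
  refine congrArg _ (sum_congr rfl fun i hi => ?_)
  rw [mem_range] at hi
  congr 1
  omega

lemma exists_nat_mul_pow_le {r s : ℝ} (hr : 0 < r) (hrs : r < s) :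
    ∃ K, 0 ≤ K ∧ ∀ k : ℕ, k * r ^ k ≤ K * s ^ k := by
  set q := s / r
  have hq : 1 < q := (one_lt_div hr).mpr hrs
  refine ⟨(q - 1)⁻¹, inv_nonneg.mpr (by linarith), fun k => ?_⟩
  have hbern : k * (q - 1) ≤ q ^ k := by
    have := one_add_mul_le_pow (by linarith : -2 ≤ q - 1) k
    rw [add_sub_cancel] at this
    linarith
  calc (k : ℝ) * r ^ k = (q - 1)⁻¹ * (k * (q - 1)) * r ^ k := by
        field_simp [(by linarith : q - 1 ≠ 0)]
    _ ≤ (q - 1)⁻¹ * q ^ k * r ^ k := by gcongr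
    _ = (q - 1)⁻¹ * s ^ k := by rw [mul_assoc, ← mul_pow, div_mul_cancel₀ s hr.ne']

lemma pow_mul_sum_range_sub_le {c : ℝ} (hc : 1 ≤ c) {q : ℕ → ℝ} (hq : ∀ m, 0 ≤ q m)
    (hqs : Summable fun m => c ^ m * q m) {w n : ℕ} (hwn : w ≤ n + 1) :
    c ^ n * ∑ i ∈ range w, q (n - i) ≤ w * c ^ w * ∑' m, c ^ m * q m := by
  set E := ∑' m, c ^ m * q m
  have hterm (i : ℕ) (hi : i < w) : c ^ n * q (n - i) ≤ c ^ w * E :=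
    calc c ^ n * q (n - i) = c ^ i * (c ^ (n - i) * q (n - i)) := by
          rw [← mul_assoc, ← pow_add, Nat.add_sub_cancel' (by omega)]
      _ ≤ c ^ w * E :=
          mul_le_mul (pow_le_pow_right₀ hc hi.le)
            (hqs.le_tsum _ fun m _ => mul_nonneg (by positivity) (hq m))
            (mul_nonneg (by positivity) (hq _)) (by positivity)
  calc c ^ n * ∑ i ∈ range w, q (n - i) = ∑ i ∈ range w, c ^ n * q (n - i) := mul_sum ..
    _ ≤ ∑ _i ∈ range w, c ^ w * E := sum_le_sum fun i hi => hterm i (mem_range.mp hi)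
    _ = w * c ^ w * E := by rw [sum_const, card_range, nsmul_eq_mul, mul_assoc]

lemma Filter.Eventually.dvd_imp_of_mul {d : ℕ} (hd : 0 < d) {P : ℕ → Prop}
    (h : ∀ᶠ m in atTop, P (d * m)) : ∀ᶠ n in atTop, d ∣ n → P n := by
  obtain ⟨M, hM⟩ := h.exists_forall_of_atTop
  filter_upwards [eventually_ge_atTop (d * M)] with n hn ⟨m, hm⟩
  subst hm
  exact hM m (Nat.le_of_mul_le_mul_left hn hd)

section ConvPow

variable {p : ℕ → ℝ}

lemma convPow_nonneg (hp : ∀ n, 0 ≤ p n) (k n : ℕ) : 0 ≤ convPow p k n := by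
  induction k generalizing n with
  | zero => unfold convPow; positivity
  | succ k ih => exact sum_nonneg fun j _ => mul_nonneg (hp j) (ih _)

lemma convPow_eq_zero_of_not_dvd {d : ℕ} (hp : ∀ n, ¬ d ∣ n → p n = 0) (k : ℕ) {n : ℕ}
    (hn : ¬ d ∣ n) : convPow p k n = 0 := by
  induction k generalizing n with
  | zero => simp only [convPow, ite_eq_right_iff]; rintro rfl; exact absurd (dvd_zero d) hn
  | succ k ih =>
    refine sum_eq_zero fun j hj => ?_
    by_cases hj' : d ∣ j
    · have : ¬ d ∣ n - j := fun h => hn <| by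
        simpa [Nat.sub_add_cancel (Nat.lt_succ_iff.mp (mem_range.mp hj))] using dvd_add h hj'
      rw [ih this, mul_zero]
    · rw [hp j hj', zero_mul]

lemma hasSum_convPow (hsum : HasSum p 1) (k : ℕ) : HasSum (convPow p k) 1 := by
  induction k with
  | zero => exact hasSum_ite_eq 0 1
  | succ k ih =>
    show HasSum (fun n => ∑ j ∈ range (n + 1), p j * convPow p k (n - j)) 1
    simpa only [hsum.tsum_eq, ih.tsum_eq, mul_one] using
      hasSum_sum_range_mul_of_summable_norm hsum.summable.norm ih.summable.norm

lemma sum_convPow_le_one (hp : ∀ n, 0 ≤ p n) (hsum : HasSum p 1) (k : ℕ) (s : Finset ℕ) :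
    ∑ n ∈ s, convPow p k n ≤ 1 :=
  sum_le_hasSum s (fun n _ => convPow_nonneg hp k n) (hasSum_convPow hsum k)

lemma convPow_le_one (hp : ∀ n, 0 ≤ p n) (hsum : HasSum p 1) (k n : ℕ) :
    convPow p k n ≤ 1 := by
  simpa using sum_convPow_le_one hp hsum k {n}

lemma convPow_succ_le_of_window {d w n k : ℕ} (hp : ∀ n, 0 ≤ p n)
    (hpd : ∀ n, ¬ d ∣ n → p n = 0) (hsum : HasSum p 1) (hwn : w ≤ n) (hdn : d ∣ n)
    {A r C : ℝ} (hA : 0 ≤ A) (hC : 0 ≤ C)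
    (hk : ∀ m, w ≤ m → d ∣ m → convPow p k m ≤ A * p m)
    (hbulk : ∑ j ∈ range (n + 1 - w), p j * p (n - j) ≤ r * p n)
    (hwin : ∀ i < w, p (n - i) ≤ C * p n) :
    convPow p (k + 1) n ≤ (A * r + C) * p n := by
  have hCp : 0 ≤ C * p n := mul_nonneg hC (hp n)
  have hfirst : ∑ j ∈ range (n + 1 - w), p j * convPow p k (n - j) ≤ A * (r * p n) :=
    calc _ ≤ ∑ j ∈ range (n + 1 - w), A * (p j * p (n - j)) := by
          refine sum_le_sum fun j hj => ?_
          by_cases hdj : d ∣ j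
          · have := hk (n - j) (by have := mem_range.mp hj; omega) (Nat.dvd_sub hdn hdj)
            exact (mul_le_mul_of_nonneg_left this (hp j)).trans_eq (by ring)
          · simp only [hpd j hdj, zero_mul, mul_zero, le_refl]
      _ = A * ∑ j ∈ range (n + 1 - w), p j * p (n - j) := (mul_sum ..).symm
      _ ≤ _ := mul_le_mul_of_nonneg_left hbulk hA
  have hsecond : ∑ i ∈ range w, p (n - i) * convPow p k (n - (n - i)) ≤ C * p n :=
    calc _ ≤ ∑ i ∈ range w, C * p n * convPow p k i := by
          refine sum_le_sum fun i hi => ?_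
          rw [Nat.sub_sub_self (by have := mem_range.mp hi; omega)]
          exact mul_le_mul_of_nonneg_right (hwin i (mem_range.mp hi)) (convPow_nonneg hp k i)
      _ = C * p n * ∑ i ∈ range w, convPow p k i := (mul_sum ..).symm
      _ ≤ C * p n := mul_le_of_le_one_right hCp (sum_convPow_le_one hp hsum k _)
  rw [convPow, sum_range_succ_eq_add_sum_reflect _ (by omega : w ≤ n + 1)]
  calc _ ≤ A * (r * p n) + C * p n := add_le_add hfirst hsecond
    _ = _ := by ring

lemma convPow_le_of_window {d : ℕ} (hp : ∀ n, 0 ≤ p n)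
    (hpd : ∀ n, ¬ d ∣ n → p n = 0) (hsum : HasSum p 1) {w N : ℕ} (hw : 0 < w) {r C : ℝ}
    (hr : 1 ≤ r) (hC : 0 ≤ C) (hinit : ∀ n, w ≤ n → n < N → d ∣ n → 1 ≤ C * p n)
    (hbulk : ∀ n, N ≤ n → d ∣ n →
      ∑ j ∈ range (n + 1 - w), p j * p (n - j) ≤ r * p n)
    (hwin : ∀ n, N ≤ n → d ∣ n → ∀ i < w, p (n - i) ≤ C * p n) (k : ℕ) :
    ∀ n, w ≤ n → d ∣ n → convPow p k n ≤ C * k * r ^ k * p n := by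
  induction k with
  | zero =>
    intro n hn _
    simp [convPow, show n ≠ 0 by omega]
  | succ k ih =>
    intro n hwn hdn
    have hCp : 0 ≤ C * p n := mul_nonneg hC (hp n)
    have hrk : 1 ≤ r ^ (k + 1) := one_le_pow₀ hr
    by_cases hnN : n < N
    · calc convPow p (k + 1) n ≤ 1 := convPow_le_one hp hsum _ _
        _ ≤ C * p n := hinit n hwn hnN hdn
        _ ≤ C * p n * ((k + 1 : ℕ) * r ^ (k + 1)) :=
            le_mul_of_one_le_right hCp (one_le_mul_of_one_le_of_one_le (by simp) hrk)
        _ = _ := by ring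
    rw [not_lt] at hnN
    calc convPow p (k + 1) n ≤ (C * k * r ^ k * r + C * 1) * p n := by
          rw [mul_one]
          exact convPow_succ_le_of_window hp hpd hsum hwn hdn (by positivity) hC ih
            (hbulk n hnN hdn) (hwin n hnN hdn)
      _ ≤ (C * k * r ^ k * r + C * r ^ (k + 1)) * p n := by gcongr; exact hp n
      _ = _ := by push_cast; ring

end ConvPow

section Probability

variable {Ω : Type*} [MeasurableSpace Ω] {μ : Measure Ω}

lemma measureReal_add_eq_sum [IsFiniteMeasure μ] {β : Type*} [MeasurableSpace β]
    [DiscreteMeasurableSpace β] {Y : Ω → ℕ} {Z : Ω → β} (hY : Measurable Y)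
    (hZ : Measurable Z) (hind : IndepFun Y Z μ) (φ : β → ℕ) (s : Set β) (n : ℕ) :
    μ.real {ω | Y ω + φ (Z ω) = n ∧ Z ω ∈ s} = ∑ j ∈ range (n + 1),
      μ.real {ω | Z ω ∈ s ∧ φ (Z ω) = j} * μ.real {ω | Y ω = n - j} := by
  have hset : {ω | Y ω + φ (Z ω) = n ∧ Z ω ∈ s}
      = ⋃ j ∈ range (n + 1), Y ⁻¹' {n - j} ∩ Z ⁻¹' (s ∩ φ ⁻¹' {j}) := by
    ext ω
    simp only [Set.mem_ofPred_eq, Set.mem_iUnion, mem_range, Set.mem_inter_iff,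
      Set.mem_preimage, Set.mem_singleton_iff, exists_prop]
    constructor
    · rintro ⟨hn, hs⟩
      exact ⟨φ (Z ω), by omega, by omega, hs, rfl⟩
    · rintro ⟨j, hj, hY, hs, rfl⟩
      exact ⟨by omega, hs⟩
  have hdisj : Set.PairwiseDisjoint ↑(range (n + 1))
      fun j => Y ⁻¹' {n - j} ∩ Z ⁻¹' (s ∩ φ ⁻¹' {j}) := by
    intro i _ j _ hij
    refine Set.disjoint_left.mpr fun ω hi hj => hij ?_
    exact hi.2.2.symm.trans hj.2.2
  rw [hset, measureReal_biUnion_finset hdisj fun j _ => (hY .of_discrete).inter (hZ .of_discrete)]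
  refine sum_congr rfl fun j _ => ?_
  rw [measureReal_def, hind.measure_inter_preimage_eq_mul _ _ .of_discrete .of_discrete,
    ENNReal.toReal_mul, mul_comm]
  rfl

lemma measureReal_sum_range_eq_convPow [IsProbabilityMeasure μ] {X : ℕ → Ω → ℕ}
    (hX : ∀ i, Measurable (X i)) (hind : iIndepFun X μ) {p : ℕ → ℝ}
    (hlaw : ∀ i n, μ.real {ω | X i ω = n} = p n) (k n : ℕ) :
    μ.real {ω | ∑ i ∈ range k, X i ω = n} = convPow p k n := by
  induction k generalizing n with
  | zero => by_cases hn : n = 0 <;> simp [convPow, hn, eq_comm]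
  | succ k ih =>
    have hS : Measurable fun ω => ∑ i ∈ range k, X i ω := by fun_prop
    have hindep : IndepFun (fun ω => ∑ i ∈ range k, X i ω) (X k) μ := by
      convert hind.indepFun_finsetSum_of_notMem hX (notMem_range_self (n := k)) using 1
      ext ω
      simp
    have := measureReal_add_eq_sum hS (hX k) hindep id Set.univ n
    simp only [Set.mem_univ, and_true, true_and, id] at this
    simp only [sum_range_succ, this, convPow, hlaw, ih]

lemma hasSum_measureReal_preimage_mul {β : Type*} [MeasurableSpace β] [DiscreteMeasurableSpace β]
    [Countable β] {Z : Ω → β} (hZ : Measurable Z) {F : β → ℝ}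
    (hF : Integrable (fun ω => F (Z ω)) μ) :
    HasSum (fun x => μ.real (Z ⁻¹' {x}) * F x) (∫ ω, F (Z ω) ∂μ) := by
  have hU : ⋃ x, Z ⁻¹' {x} = Set.univ := by ext; simp
  have := hasSum_integral_iUnion (fun x => hZ (.singleton x)) (pairwise_disjoint_fiber Z)
    (by rw [hU]; exact hF.integrableOn)
  rw [hU, Measure.restrict_univ] at this
  refine this.congr_fun fun x => ?_
  rw [setIntegral_congr_fun (hZ (.singleton x)) fun ω (hω : Z ω = x) => by rw [hω],
    setIntegral_const, smul_eq_mul]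

lemma hasSum_measureReal_eq [IsProbabilityMeasure μ] {β : Type*} [MeasurableSpace β]
    [DiscreteMeasurableSpace β] [Countable β] {X : Ω → β} (hX : Measurable X) :
    HasSum (fun x => μ.real {ω | X ω = x}) 1 := by
  have := hasSum_measureReal_preimage_mul hX (F := fun _ => 1) (integrable_const (μ := μ) 1)
  simp only [mul_one, integral_const, probReal_univ, smul_eq_mul] at this
  exact this

lemma summable_pow_mul_pow_mul_measureReal {f h : Ω → ℕ} (hf : Measurable f)
    (hh : Measurable h) {c : ℝ} (hint : Integrable (fun ω => c ^ (f ω + h ω)) μ) :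
    Summable fun x : ℕ × ℕ =>
      c ^ x.1 * (c ^ x.2 * μ.real {ω | f ω = x.1 ∧ h ω = x.2}) := by
  refine (hasSum_measureReal_preimage_mul (hf.prodMk hh) (F := fun x => c ^ (x.1 + x.2))
    hint).summable.congr fun x => ?_
  simp only [Set.preimage, Set.mem_singleton_iff, Prod.ext_iff, pow_add]
  ring

lemma measureReal_sum_add_eq_sum_convPow [IsProbabilityMeasure μ] {X : ℕ → Ω → ℕ}
    {f h : Ω → ℕ} (hX : ∀ i, Measurable (X i)) (hf : Measurable f) (hh : Measurable h)
    {p : ℕ → ℝ} (hlaw : ∀ i n, μ.real {ω | X i ω = n} = p n) (hiid : iIndepFun X μ)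
    (hindep : IndepFun (fun ω => (f ω, h ω)) (fun ω i => X i ω) μ) (k n : ℕ) :
    μ.real {ω | (∑ i ∈ range k, X i ω) + h ω = n ∧ f ω = k}
      = ∑ m ∈ range (n + 1), μ.real {ω | f ω = k ∧ h ω = m} * convPow p k (n - m) := by
  have hS : Measurable fun ω => ∑ i ∈ range k, X i ω := by fun_prop
  have hSfh : IndepFun (fun ω => ∑ i ∈ range k, X i ω) (fun ω => (f ω, h ω)) μ :=
    (hindep.comp measurable_id
      (by fun_prop : Measurable fun x : ℕ → ℕ => ∑ i ∈ range k, x i)).symm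
  refine (measureReal_add_eq_sum hS (hf.prodMk hh) hSfh Prod.snd {x | x.1 = k} n).trans ?_
  simp only [measureReal_sum_range_eq_convPow hX hiid hlaw]
  rfl

end Probability

namespace SubexpClass

variable {d : ℕ} {p : ℕ → ℝ} {ρ : ℝ}

lemma pos (hp : SubexpClass d p ρ) : 0 < d := hp.1

lemma nonneg (hp : SubexpClass d p ρ) (n : ℕ) : 0 ≤ p n := hp.2.2.1 n

lemma eq_zero_of_not_dvd (hp : SubexpClass d p ρ) {n : ℕ} (hn : ¬ d ∣ n) : p n = 0 :=
  hp.2.2.2.1 n hn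

lemma eventually_pos (hp : SubexpClass d p ρ) : ∀ᶠ n in atTop, d ∣ n → 0 < p n := by
  obtain ⟨N, hN⟩ := hp.2.2.2.2.1
  filter_upwards [eventually_ge_atTop N] with n hn using hN n hn

lemma eventually_pos_mul (hp : SubexpClass d p ρ) : ∀ᶠ m in atTop, 0 < p (d * m) :=
  ((tendsto_id.const_mul_atTop' hp.pos).eventually hp.eventually_pos).mono
    fun m hm => hm (dvd_mul_right d m)

lemma tendsto_ratio (hp : SubexpClass d p 1) :
    Tendsto (fun m => p (d * m) / p (d * m + d)) atTop (𝓝 1) := by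
  simpa only [one_pow] using hp.2.2.2.2.2.2.2.1

lemma tendsto_conv (hp : SubexpClass d p 1) (hsum : HasSum p 1) :
    Tendsto (fun m => (∑ i ∈ range (d * m + 1), p i * p (d * m - i)) / p (d * m))
      atTop (𝓝 2) := by
  simpa only [one_pow, mul_one, hsum.tsum_eq] using hp.2.2.2.2.2.2.2.2

lemma exists_le_pow_mul (hp : SubexpClass d p 1) {c : ℝ} (hc : 1 < c) :
    ∃ N, d ∣ N ∧ ∀ a b, N ≤ a → a ≤ b → d ∣ a → d ∣ b →
      0 < p a ∧ p a ≤ c ^ (b - a) * p b ∧ p b ≤ c ^ (b - a) * p a := by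
  have hc0 : 0 < c := zero_lt_one.trans hc
  obtain ⟨M, hM⟩ : ∃ M, ∀ m ≥ M, 0 < p (d * m) ∧
      p (d * m) ≤ c * p (d * (m + 1)) ∧ p (d * (m + 1)) ≤ c * p (d * m) := by
    have hratio := hp.tendsto_ratio.eventually (Ioo_mem_nhds (inv_lt_one_of_one_lt₀ hc) hc)
    have hnext := (tendsto_add_atTop_nat 1).eventually hp.eventually_pos_mul
    obtain ⟨M, hM⟩ := (hratio.and (hp.eventually_pos_mul.and hnext)).exists_forall_of_atTop
    refine ⟨M, fun m hm => ?_⟩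
    obtain ⟨⟨hlo, hhi⟩, hpos, hpos'⟩ := hM m hm
    rw [mul_add_one] at hpos' ⊢
    rw [div_lt_iff₀ hpos'] at hhi
    rw [lt_div_iff₀ hpos', inv_mul_lt_iff₀ hc0] at hlo
    exact ⟨hpos, hhi.le, hlo.le⟩
  have hchain : ∀ m ≥ M, ∀ t, p (d * m) ≤ c ^ t * p (d * (m + t)) ∧
      p (d * (m + t)) ≤ c ^ t * p (d * m) := by
    intro m hm t
    induction t with
    | zero => simp
    | succ t ih =>
      obtain ⟨-, hup, hdown⟩ := hM (m + t) (by omega)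
      rw [← add_assoc, pow_succ']
      constructor
      · calc p (d * m) ≤ c ^ t * p (d * (m + t)) := ih.1
          _ ≤ c ^ t * (c * p (d * (m + t + 1))) := by gcongr
          _ = c * c ^ t * p (d * (m + t + 1)) := by ring
      · calc p (d * (m + t + 1)) ≤ c * p (d * (m + t)) := hdown
          _ ≤ c * (c ^ t * p (d * m)) := by gcongr; exact ih.2
          _ = c * c ^ t * p (d * m) := by ring
  refine ⟨d * M, dvd_mul_right d M, ?_⟩
  rintro _ _ hMa hab ⟨m, rfl⟩ ⟨m', rfl⟩
  have hmm' : m ≤ m' := Nat.le_of_mul_le_mul_left hab hp.pos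
  have hMm : M ≤ m := Nat.le_of_mul_le_mul_left hMa hp.pos
  obtain ⟨t, rfl⟩ := Nat.exists_eq_add_of_le hmm'
  have hpow : c ^ t ≤ c ^ (d * (m + t) - d * m) := by
    rw [mul_add, Nat.add_sub_cancel_left]
    exact pow_le_pow_right₀ hc.le (Nat.le_mul_of_pos_left t hp.pos)
  obtain ⟨hup, hdown⟩ := hchain m hMm t
  have hpos := (hM m hMm).1
  exact ⟨hpos, hup.trans (mul_le_mul_of_nonneg_right hpow (hp.nonneg _)),
    hdown.trans (mul_le_mul_of_nonneg_right hpow (hp.nonneg _))⟩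

lemma eventually_shift_le (hp : SubexpClass d p 1) {η : ℝ} (hη : 0 < η) (w : ℕ) :
    ∀ᶠ n in atTop, d ∣ n → ∀ i ≤ w, d ∣ i →
      p (n - i) ≤ (1 + η) * p n ∧ p n ≤ (1 + η) * p (n - i) := by
  obtain ⟨c, hc1, hcw⟩ : ∃ c : ℝ, 1 < c ∧ c ^ w < 1 + η := by
    have hcont : Tendsto (fun c : ℝ => c ^ w) (𝓝[>] 1) (𝓝 1) := by
      simpa using ((continuous_pow w).tendsto (1 : ℝ)).mono_left nhdsWithin_le_nhds
    exact (eventually_mem_nhdsWithin.and (hcont.eventually_lt_const (by linarith))).exists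
  obtain ⟨N, -, hN⟩ := hp.exists_le_pow_mul hc1
  filter_upwards [eventually_ge_atTop (N + w)] with n hn hdn i hi hdi
  have hpow : c ^ (n - (n - i)) ≤ 1 + η := by
    rw [Nat.sub_sub_self (by omega)]
    exact (pow_le_pow_right₀ hc1.le hi).trans hcw.le
  obtain ⟨-, hup, hdown⟩ := hN (n - i) n (by omega) (Nat.sub_le n i) (Nat.dvd_sub hdn hdi) hdn
  exact ⟨hup.trans (mul_le_mul_of_nonneg_right hpow (hp.nonneg n)),
    hdown.trans (mul_le_mul_of_nonneg_right hpow (hp.nonneg _))⟩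

lemma eventually_sum_mul_le (hp : SubexpClass d p 1) (hsum : HasSum p 1) {η : ℝ} (hη : 0 < η) :
    ∀ᶠ w in atTop, ∀ᶠ n in atTop, d ∣ n →
      ∑ j ∈ range (n + 1 - w), p j * p (n - j) ≤ (1 + η) * p n := by
  set θ := min (η / 5) 1
  have hθ0 : 0 < θ := lt_min (by positivity) one_pos
  have hθ1 : θ ≤ 1 := min_le_right _ _
  have hθη : 5 * θ ≤ η := by have := min_le_left (η / 5) 1; linarith
  have hconv : ∀ᶠ n in atTop, d ∣ n →
      ∑ j ∈ range (n + 1), p j * p (n - j) ≤ (2 + θ) * p n := by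
    refine Filter.Eventually.dvd_imp_of_mul hp.pos ?_
    filter_upwards [(hp.tendsto_conv hsum).eventually_lt_const (by linarith : (2 : ℝ) < 2 + θ),
      hp.eventually_pos_mul] with m hm hpos
    exact ((div_lt_iff₀ hpos).mp hm).le
  filter_upwards [hsum.tendsto_sum_nat.eventually_const_le (by linarith : 1 - θ < 1)] with w hw
  filter_upwards [hconv, hp.eventually_shift_le hθ0 w, eventually_ge_atTop w]
    with n hfull hshift hwn hdn
  have htail : (1 - θ) * p n ≤ (1 + θ) * ∑ i ∈ range w, p (n - i) * p (n - (n - i)) := by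
    calc (1 - θ) * p n ≤ (∑ i ∈ range w, p i) * p n :=
          mul_le_mul_of_nonneg_right hw (hp.nonneg n)
      _ ≤ ∑ i ∈ range w, (1 + θ) * (p (n - i) * p i) := by
          rw [sum_mul]
          refine sum_le_sum fun i hi => ?_
          by_cases hdi : d ∣ i
          · have := (hshift hdn i (mem_range.mp hi).le hdi).2
            nlinarith [hp.nonneg i]
          · simp [hp.eq_zero_of_not_dvd hdi]
      _ = (1 + θ) * ∑ i ∈ range w, p (n - i) * p (n - (n - i)) := by
          rw [mul_sum]
          refine sum_congr rfl fun i hi => ?_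
          rw [Nat.sub_sub_self (by have := mem_range.mp hi; omega)]
  have hsplit := hfull hdn
  rw [sum_range_succ_eq_add_sum_reflect _ (by omega : w ≤ n + 1)] at hsplit
  -- `(1 + θ) (2 + θ) - (1 - θ) ≤ (1 + θ) (1 + η)` since `5 θ ≤ η` and `θ ≤ 1`
  have hgap : 0 ≤ (η + θ * η - 3 * θ - θ ^ 2) * p n :=
    mul_nonneg (by nlinarith) (hp.nonneg n)
  refine le_of_mul_le_mul_left ?_ (by linarith : (0 : ℝ) < 1 + θ)
  nlinarith [mul_le_mul_of_nonneg_left hsplit (by linarith : (0 : ℝ) ≤ 1 + θ)]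

theorem exists_convPow_le (hp : SubexpClass d p 1) (hsum : HasSum p 1) {ε : ℝ} (hε : 0 < ε) :
    ∃ K, 0 ≤ K ∧ ∃ n₀, ∀ k n, n₀ ≤ n → d ∣ n →
      convPow p k n ≤ K * (1 + ε) ^ k * p n := by
  obtain ⟨w, hw, hwpos, hwbulk⟩ : ∃ w, 0 < w ∧ (∀ n, w ≤ n → d ∣ n → 0 < p n) ∧
      ∀ᶠ n in atTop, d ∣ n →
        ∑ j ∈ range (n + 1 - w), p j * p (n - j) ≤ (1 + ε / 2) * p n := by
    obtain ⟨N, hN⟩ := hp.eventually_pos.exists_forall_of_atTop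
    obtain ⟨w, hw⟩ := (hp.eventually_sum_mul_le hsum (half_pos hε)).exists_forall_of_atTop
    exact ⟨max w (N + 1), by omega, fun n hn => hN n (by omega), hw _ (le_max_left _ _)⟩
  obtain ⟨N, hN⟩ := ((hwbulk.and (hp.eventually_shift_le one_pos w)).and
    (eventually_ge_atTop w)).exists_forall_of_atTop
  -- `C` dominates `1 / p n` for the finitely many `n ∈ [w, N)`, and the window ratios
  -- `p (n - i) / p n ≤ 2` beyond `N`
  set C := 2 + ∑ n ∈ (Ico w N).filter (d ∣ ·), (p n)⁻¹
  have hinv : ∀ n, 0 ≤ (p n)⁻¹ := fun n => inv_nonneg.mpr (hp.nonneg n)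
  have hC : 0 ≤ C := add_nonneg zero_le_two (sum_nonneg fun n _ => hinv n)
  have hbound := convPow_le_of_window hp.nonneg (fun n => hp.eq_zero_of_not_dvd) hsum hw
    (by linarith : 1 ≤ 1 + ε / 2) hC ?init (fun n hn hdn => (hN n hn).1.1 hdn) ?win
  case init =>
    intro n hwn hnN hdn
    have : (p n)⁻¹ ≤ C := le_add_of_nonneg_of_le zero_le_two
      (single_le_sum (fun i _ => hinv i) (mem_filter.mpr ⟨mem_Ico.mpr ⟨hwn, hnN⟩, hdn⟩))
    calc (1 : ℝ) = (p n)⁻¹ * p n := (inv_mul_cancel₀ (hwpos n hwn hdn).ne').symm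
      _ ≤ C * p n := mul_le_mul_of_nonneg_right this (hp.nonneg n)
  case win =>
    intro n hn hdn i hi
    obtain ⟨⟨-, hshift⟩, hwn⟩ := hN n hn
    by_cases hdi : d ∣ i
    · calc p (n - i) ≤ (1 + 1) * p n := ((hshift hdn i hi.le hdi).1)
        _ ≤ C * p n := mul_le_mul_of_nonneg_right
            (le_add_of_le_of_nonneg (by norm_num) (sum_nonneg fun n _ => hinv n)) (hp.nonneg n)
    · have hin : i ≤ n := by omega
      have : ¬ d ∣ n - i := fun h => hdi <| by
        simpa [Nat.sub_sub_self hin] using Nat.dvd_sub hdn h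
      rw [hp.eq_zero_of_not_dvd this]
      exact mul_nonneg hC (hp.nonneg n)
  obtain ⟨K, hK0, hK⟩ := exists_nat_mul_pow_le (by positivity : (0 : ℝ) < 1 + ε / 2)
    (by linarith : 1 + ε / 2 < 1 + ε)
  refine ⟨C * K, mul_nonneg hC hK0, w, fun k n hn hdn => ?_⟩
  calc convPow p k n ≤ C * (k * (1 + ε / 2) ^ k) * p n := by
        simpa only [mul_assoc] using hbound k n hn hdn
    _ ≤ C * (K * (1 + ε) ^ k) * p n :=
        mul_le_mul_of_nonneg_right (mul_le_mul_of_nonneg_left (hK k) hC) (hp.nonneg n)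
    _ = C * K * (1 + ε) ^ k * p n := by ring

lemma exists_convPow_sub_le (hp : SubexpClass d p 1) (hsum : HasSum p 1) {δ : ℝ} (hδ : 0 < δ) :
    ∃ K, 0 ≤ K ∧ ∃ w, ∀ k m n, w + m ≤ n → d ∣ n →
      convPow p k (n - m) ≤ K * (1 + δ) ^ (k + m) * p n := by
  obtain ⟨K, hK, n₁, hn₁⟩ := hp.exists_convPow_le hsum hδ
  obtain ⟨N, -, hN⟩ := hp.exists_le_pow_mul (by linarith : 1 < 1 + δ)
  refine ⟨K, hK, max n₁ N, fun k m n hmn hdn => ?_⟩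
  by_cases hdm : d ∣ n - m
  · have hshift := (hN (n - m) n (by omega) (Nat.sub_le n m) hdm hdn).2.1
    rw [Nat.sub_sub_self (by omega)] at hshift
    calc convPow p k (n - m) ≤ K * (1 + δ) ^ k * p (n - m) := hn₁ k (n - m) (by omega) hdm
      _ ≤ K * (1 + δ) ^ k * ((1 + δ) ^ m * p n) := by gcongr
      _ = K * (1 + δ) ^ (k + m) * p n := by ring
  · rw [convPow_eq_zero_of_not_dvd (fun j => hp.eq_zero_of_not_dvd) k hdm]
    exact mul_nonneg (by positivity) (hp.nonneg n)

lemma exists_pos_le_pow_mul (hp : SubexpClass d p 1) {c : ℝ} (hc : 1 < c) :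
    ∃ a, 0 < a ∧ ∀ᶠ n in atTop, d ∣ n → a ≤ c ^ n * p n := by
  obtain ⟨N, hdN, hN⟩ := hp.exists_le_pow_mul hc
  refine ⟨p N, (hN N N le_rfl le_rfl hdN hdN).1, ?_⟩
  filter_upwards [eventually_ge_atTop N] with n hn hdn
  exact (hN N n le_rfl hn hdN hdn).2.1.trans
    (mul_le_mul_of_nonneg_right (pow_le_pow_right₀ hc.le (Nat.sub_le n N)) (hp.nonneg n))

theorem exists_sum_mul_convPow_le (hp : SubexpClass d p 1) (hsum : HasSum p 1) {δ : ℝ}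
    (hδ : 0 < δ) : ∃ K, 0 ≤ K ∧ ∃ n₀, ∀ q : ℕ → ℝ, (∀ m, 0 ≤ q m) →
      Summable (fun m => (1 + δ) ^ m * q m) → ∀ k n, n₀ ≤ n → d ∣ n →
        ∑ m ∈ range (n + 1), q m * convPow p k (n - m)
          ≤ K * (1 + δ) ^ k * (∑' m, (1 + δ) ^ m * q m) * p n := by
  obtain ⟨K, hK, w₁, hconv⟩ := hp.exists_convPow_sub_le hsum hδ
  obtain ⟨a, ha, hlow⟩ := hp.exists_pos_le_pow_mul (by linarith : 1 < 1 + δ)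
  obtain ⟨w₂, hw₂⟩ := hlow.exists_forall_of_atTop
  set w := max w₁ w₂
  refine ⟨K + w * (1 + δ) ^ w / a, add_nonneg hK (by positivity), w,
    fun q hq hqs k n hn hdn => ?_⟩
  set E := ∑' m, (1 + δ) ^ m * q m
  have hterm : ∀ m, 0 ≤ (1 + δ) ^ m * q m := fun m => mul_nonneg (by positivity) (hq m)
  have hpn : 0 ≤ p n := hp.nonneg n
  have hbulk : ∑ m ∈ range (n + 1 - w), q m * convPow p k (n - m)
      ≤ K * (1 + δ) ^ k * E * p n :=
    calc _ ≤ ∑ m ∈ range (n + 1 - w), K * (1 + δ) ^ k * p n * ((1 + δ) ^ m * q m) := by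
          refine sum_le_sum fun m hm => ?_
          have := hconv k m n (by have := mem_range.mp hm; omega) hdn
          exact (mul_le_mul_of_nonneg_left this (hq m)).trans_eq (by ring)
      _ ≤ K * (1 + δ) ^ k * p n * E := by
          rw [← mul_sum]
          gcongr
          exact hqs.sum_le_tsum _ fun m _ => hterm m
      _ = _ := by ring
  have hwindow : ∑ i ∈ range w, q (n - i) * convPow p k (n - (n - i))
      ≤ w * (1 + δ) ^ w / a * E * p n := by
    have hle : ∑ i ∈ range w, q (n - i) * convPow p k (n - (n - i))
        ≤ ∑ i ∈ range w, q (n - i) :=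
      sum_le_sum fun i _ => mul_le_of_le_one_right (hq _) (convPow_le_one hp.nonneg hsum _ _)
    rw [div_mul_eq_mul_div, div_mul_eq_mul_div, le_div_iff₀ ha]
    calc (∑ i ∈ range w, q (n - i) * convPow p k (n - (n - i))) * a
        ≤ (∑ i ∈ range w, q (n - i)) * ((1 + δ) ^ n * p n) :=
          mul_le_mul hle (hw₂ n (by omega) hdn) ha.le (sum_nonneg fun i _ => hq _)
      _ = (1 + δ) ^ n * (∑ i ∈ range w, q (n - i)) * p n := by ring
      _ ≤ w * (1 + δ) ^ w * E * p n := mul_le_mul_of_nonneg_right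
          (pow_mul_sum_range_sub_le (by linarith) hq hqs (by omega)) hpn
  have hδk : 1 ≤ (1 + δ) ^ k := one_le_pow₀ (by linarith)
  have hwin0 : 0 ≤ w * (1 + δ) ^ w / a * E * p n :=
    mul_nonneg (mul_nonneg (by positivity) (tsum_nonneg hterm)) hpn
  rw [sum_range_succ_eq_add_sum_reflect _ (by omega : w ≤ n + 1)]
  calc _ ≤ K * (1 + δ) ^ k * E * p n + w * (1 + δ) ^ w / a * E * p n :=
        add_le_add hbulk hwindow
    _ ≤ K * (1 + δ) ^ k * E * p n + w * (1 + δ) ^ w / a * E * p n * (1 + δ) ^ k :=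
        add_le_add_right (le_mul_of_one_le_right hwin0 hδk) _
    _ = _ := by ring

end SubexpClass

theorem randomly_stopped_sum_uniform_bound_general
    {Ω : Type*} [MeasurableSpace Ω] (μ : Measure Ω) [IsProbabilityMeasure μ]
    (d : ℕ) (p : ℕ → ℝ) (hp : SubexpClass d p 1)
    (gs : ℕ → Ω → ℕ) (f h : Ω → ℕ)
    (hgsmeas : ∀ i, Measurable (gs i)) (hfmeas : Measurable f) (hhmeas : Measurable h)
    (hdist : ∀ i n, (μ {ω | gs i ω = n}).toReal = p n)
    (hiid : iIndepFun gs μ)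
    (hindep : IndepFun (fun ω => (f ω, h ω)) (fun ω i => gs i ω) μ)
    (hexp : ∃ δ : ℝ, 0 < δ ∧ Integrable (fun ω => (1 + δ) ^ (f ω + h ω)) μ) :
    ∃ C : ℕ → ℝ, (∀ k, 0 ≤ C k) ∧ Summable C ∧ ∃ n₀ : ℕ,
      ∀ k n : ℕ, n₀ ≤ n → d ∣ n →
        (μ {ω | (∑ i ∈ Finset.range k, gs i ω) + h ω = n ∧ f ω = k}).toReal
          ≤ C k * p n := by
  obtain ⟨δ, hδ, hint⟩ := hexp
  have hsum : HasSum p 1 :=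
    (hasSum_measureReal_eq (hgsmeas 0)).congr_fun fun n => (hdist 0 n).symm
  obtain ⟨K, hK, n₀, hbound⟩ := hp.exists_sum_mul_convPow_le hsum hδ
  set q : ℕ → ℕ → ℝ := fun k m => μ.real {ω | f ω = k ∧ h ω = m}
  have hmoment := summable_pow_mul_pow_mul_measureReal hfmeas hhmeas hint
  have hrow k : Summable fun m => (1 + δ) ^ m * q k m :=
    (summable_mul_left_iff (a := (1 + δ) ^ k) (by positivity)).mp (hmoment.prod_factor k)
  have hq k m : 0 ≤ q k m := measureReal_nonneg
  refine ⟨fun k => K * (1 + δ) ^ k * ∑' m, (1 + δ) ^ m * q k m,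
    fun k => mul_nonneg (by positivity) (tsum_nonneg fun m => mul_nonneg (by positivity) (hq k m)),
    ?_, n₀, fun k n hn hdn => ?_⟩
  · simpa only [tsum_mul_left, mul_assoc] using hmoment.prod.mul_left K
  calc μ.real {ω | (∑ i ∈ range k, gs i ω) + h ω = n ∧ f ω = k}
      = ∑ m ∈ range (n + 1), q k m * convPow p k (n - m) :=
        measureReal_sum_add_eq_sum_convPow hgsmeas hfmeas hhmeas hdist hiid hindep k n
    _ ≤ _ := hbound (q k) (hq k) (hrow k) k n hn hdn

/-- Let `g` be an `ℕ`-valued random variable whose density `p` is subexponential on the lattice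
`dℕ` (i.e. `p ∈ 𝒮_d` with radius of convergence `1`), let `(f, h)` be a random vector of
non-negative integers with finite exponential moments such that `h` is a.s. divisible by `d`,
and let `(gᵢ)` be i.i.d. copies of `g`, independent of `(f, h)`. Then there are a summable
sequence `(C_k)` of non-negative reals and an `n₀` such that for all `k ≥ 0` and `n ≥ n₀`
divisible by `d`, `ℙ(∑_{i<k} gᵢ + h = n, f = k) ≤ C_k ℙ(g = n)`. -/
theorem randomly_stopped_sum_uniform_bound
    {Ω : Type*} [MeasurableSpace Ω] (μ : Measure Ω) [IsProbabilityMeasure μ]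
    (d : ℕ) (p : ℕ → ℝ) (hp : SubexpClass d p 1)
    (gs : ℕ → Ω → ℕ) (f h : Ω → ℕ)
    (hgsmeas : ∀ i, Measurable (gs i)) (hfmeas : Measurable f) (hhmeas : Measurable h)
    (hdist : ∀ i n, (μ {ω | gs i ω = n}).toReal = p n)
    (hiid : iIndepFun gs μ)
    (hindep : IndepFun (fun ω => (f ω, h ω)) (fun ω i => gs i ω) μ)
    (hdvd : ∀ᵐ ω ∂μ, d ∣ h ω)
    (hexp : ∃ δ : ℝ, 0 < δ ∧ Integrable (fun ω => (1 + δ) ^ (f ω + h ω)) μ) :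
    ∃ C : ℕ → ℝ, (∀ k, 0 ≤ C k) ∧ Summable C ∧ ∃ n₀ : ℕ,
      ∀ k n : ℕ, n₀ ≤ n → d ∣ n →
        (μ {ω | (∑ i ∈ Finset.range k, gs i ω) + h ω = n ∧ f ω = k}).toReal
          ≤ C k * p n :=
  randomly_stopped_sum_uniform_bound_general μ d p hp gs f h hgsmeas hfmeas hhmeas hdist hiid hindep
    hexp
end

section
/- Let d ≥ 1 be an integer, let g be an ℕ₀-valued random variable with subexponential density on the lattice dℕ, and let Y be an ℕ₀-valued random variable, independent of g, almost surely divisible by d, with 𝔼[(1+δ)^Y] < ∞ for some δ > 0. Then ℙ(g + Y = n) ~ ℙ(g = n) as n → ∞ along multiples of d. -/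
open MeasureTheory ProbabilityTheory
open Filter Finset Topology

section LongTailed

variable {a : ℕ → ℝ}

theorem tendsto_div_sub_of_tendsto_div_succ (hpos : ∀ᶠ m in atTop, 0 < a m)
    (h : Tendsto (fun m => a m / a (m + 1)) atTop (𝓝 1)) (j : ℕ) :
    Tendsto (fun m => a (m - j) / a m) atTop (𝓝 1) := by
  induction j with
  | zero =>
    refine tendsto_const_nhds.congr' ?_
    filter_upwards [hpos] with m hm
    simp [hm.ne']
  | succ j ih =>
    have hstep : Tendsto (fun m => a (m - (j + 1)) / a (m - j)) atTop (𝓝 1) := by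
      refine (h.comp (tendsto_sub_atTop_nat (j + 1))).congr' ?_
      filter_upwards [eventually_ge_atTop (j + 1)] with m hm
      simp only [Function.comp_apply]
      congr 3
      omega
    have hpos_sub : ∀ᶠ m in atTop, 0 < a (m - j) := tendsto_sub_atTop_nat j hpos
    simpa using (hstep.mul ih).congr' <| by
      filter_upwards [hpos_sub] with m hm
      exact div_mul_div_cancel₀ hm.ne'

theorem le_pow_mul_of_le_mul_succ {r : ℝ} {M : ℕ} (hr : 0 ≤ r)
    (h : ∀ m ≥ M, a m ≤ r * a (m + 1)) {i : ℕ} (hi : M ≤ i) (k : ℕ) :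
    a i ≤ r ^ k * a (i + k) := by
  induction k with
  | zero => simp
  | succ k ih =>
    calc a i ≤ r ^ k * a (i + k) := ih
      _ ≤ r ^ k * (r * a (i + k + 1)) := by gcongr; exact h _ (by omega)
      _ = r ^ (k + 1) * a (i + (k + 1)) := by ring_nf

theorem exists_le_mul_pow_of_tendsto_div_succ {r : ℝ} (hr : 1 < r)
    (hbdd : BddAbove (Set.range a)) (hpos : ∀ᶠ m in atTop, 0 < a m)
    (h : Tendsto (fun m => a m / a (m + 1)) atTop (𝓝 1)) :
    ∃ C, 0 ≤ C ∧ ∀ᶠ m in atTop, ∀ j ≤ m, a (m - j) ≤ C * r ^ j * a m := by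
  obtain ⟨T, hT⟩ := hbdd
  have hstep : ∀ᶠ m in atTop, 0 < a m ∧ a m ≤ r * a (m + 1) := by
    filter_upwards [hpos, tendsto_add_atTop_nat 1 hpos, h.eventually_lt_const hr]
      with m hm hm1 hlt
    exact ⟨hm, ((div_lt_iff₀ hm1).1 hlt).le⟩
  obtain ⟨M, hM⟩ := eventually_atTop.1 hstep
  have haM : 0 < a M := (hM M le_rfl).1
  have hchain : ∀ i, M ≤ i → ∀ k, a i ≤ r ^ k * a (i + k) := fun i hi k =>
    le_pow_mul_of_le_mul_succ (by linarith) (fun n hn => (hM n hn).2) hi k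
  refine ⟨max 1 (T / a M), by positivity, ?_⟩
  filter_upwards [eventually_ge_atTop M] with m hm j hj
  have ham : 0 ≤ a m := (hM m hm).1.le
  rcases le_or_gt M (m - j) with hMj | hMj
  · calc a (m - j) ≤ r ^ j * a m := by simpa [Nat.sub_add_cancel hj] using hchain _ hMj j
      _ ≤ max 1 (T / a M) * r ^ j * a m := by
        rw [mul_assoc]
        exact le_mul_of_one_le_left (by positivity) (le_max_left _ _)
  · have hTM : 0 ≤ T / a M := div_nonneg (haM.le.trans (hT ⟨M, rfl⟩)) haM.le
    calc a (m - j) ≤ T := hT ⟨_, rfl⟩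
      _ = T / a M * a M := by field_simp
      _ ≤ T / a M * (r ^ j * a m) := by
        gcongr
        calc a M ≤ r ^ (m - M) * a m := by
              simpa [Nat.add_sub_cancel' hm] using hchain M le_rfl (m - M)
          _ ≤ r ^ j * a m := by gcongr <;> [linarith; omega]
      _ ≤ max 1 (T / a M) * r ^ j * a m := by
        rw [mul_assoc]; gcongr; exact le_max_right _ _

end LongTailed

theorem tendsto_sum_range_mul_sub_div {a w : ℕ → ℝ} {r C : ℝ} (ha : ∀ n, 0 ≤ a n)
    (hw : ∀ k, 0 ≤ w k) (hr : 0 ≤ r) (hC : 0 ≤ C) (hsum : Summable fun k => r ^ k * w k)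
    (hlim : ∀ j, Tendsto (fun m => a (m - j) / a m) atTop (𝓝 1))
    (hdom : ∀ᶠ m in atTop, ∀ j ≤ m, a (m - j) ≤ C * r ^ j * a m) :
    Tendsto (fun m => (∑ j ∈ range (m + 1), a (m - j) * w j) / a m) atTop
      (𝓝 (∑' j, w j)) := by
  set F : ℕ → ℕ → ℝ := fun m j => if j ≤ m then a (m - j) / a m * w j else 0
  have hF : ∀ m, (∑ j ∈ range (m + 1), a (m - j) * w j) / a m = ∑' j, F m j := by
    intro m
    rw [sum_div, tsum_eq_sum (s := range (m + 1)) fun j hj =>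
      if_neg (by simpa [Nat.lt_succ_iff] using hj)]
    refine sum_congr rfl fun j hj => ?_
    rw [if_pos (Nat.lt_succ_iff.1 (mem_range.1 hj))]
    ring
  simp_rw [hF]
  refine tendsto_tsum_of_dominated_convergence (hsum.mul_left C) (fun j => ?_) ?_
  · simpa using ((hlim j).mul_const (w j)).congr' <| by
      filter_upwards [eventually_ge_atTop j] with m hm
      simp [F, hm]
  · filter_upwards [hdom] with m hm j
    by_cases hj : j ≤ m
    · have hq : a (m - j) / a m ≤ C * r ^ j :=
        div_le_of_le_mul₀ (ha m) (by positivity) (hm j hj)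
      simp only [F, if_pos hj]
      rw [Real.norm_of_nonneg (mul_nonneg (div_nonneg (ha _) (ha m)) (hw j))]
      calc a (m - j) / a m * w j ≤ C * r ^ j * w j := by gcongr; exact hw j
        _ = C * (r ^ j * w j) := mul_assoc _ _ _
    · simp only [F, if_neg hj, norm_zero]
      exact mul_nonneg hC (mul_nonneg (pow_nonneg hr j) (hw j))

section Lattice

variable {M : Type*} [AddCommMonoid M] {d : ℕ} {f : ℕ → M}

theorem sum_range_mul_add_one_of_support_dvd (hd : 0 < d) (hf : ∀ k, ¬ d ∣ k → f k = 0)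
    (m : ℕ) : ∑ k ∈ range (d * m + 1), f k = ∑ j ∈ range (m + 1), f (d * j) := by
  rw [← sum_image fun i _ j _ h => Nat.eq_of_mul_eq_mul_left hd h]
  refine (sum_subset (fun k hk => ?_) fun k hk hk' => hf k ?_).symm
  · obtain ⟨j, hj, rfl⟩ := mem_image.1 hk
    simp only [mem_range] at hj ⊢
    nlinarith
  · rintro ⟨j, rfl⟩
    refine hk' (mem_image.2 ⟨j, ?_, rfl⟩)
    simp only [mem_range] at hk ⊢
    by_contra! hj
    nlinarith

variable [TopologicalSpace M]

theorem tsum_comp_mul_left_of_support_dvd (hd : 0 < d) (hf : ∀ k, ¬ d ∣ k → f k = 0) :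
    ∑' j, f (d * j) = ∑' k, f k :=
  (mul_right_injective₀ hd.ne').tsum_eq fun k hk => by
    by_contra h
    exact hk (hf k fun ⟨j, hj⟩ => h ⟨j, hj.symm⟩)

theorem summable_comp_mul_left_iff_of_support_dvd (hd : 0 < d)
    (hf : ∀ k, ¬ d ∣ k → f k = 0) : Summable (fun j => f (d * j)) ↔ Summable f :=
  (mul_right_injective₀ hd.ne').summable_iff fun k hk =>
    hf k fun ⟨j, hj⟩ => hk ⟨j, hj.symm⟩

end Lattice

section Discrete

variable {Ω α : Type*} [MeasurableSpace Ω] {μ : Measure Ω} {Y : Ω → α}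

theorem measureReal_preimage_singleton_eq_zero_of_ae {P : α → Prop}
    (h : ∀ᵐ ω ∂μ, P (Y ω)) {k : α} (hk : ¬ P k) : μ.real (Y ⁻¹' {k}) = 0 := by
  have h0 : μ (Y ⁻¹' {k}) = 0 :=
    measure_mono_null (fun ω (hω : Y ω = k) => show ¬ P (Y ω) from hω ▸ hk) (ae_iff.1 h)
  rw [measureReal_def, h0, ENNReal.toReal_zero]

variable [MeasurableSpace α] [Countable α] [MeasurableSingletonClass α]

theorem summable_measureReal_preimage_singleton_mul_norm {f : α → ℝ} (hY : Measurable Y)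
    (hf : Integrable (fun ω => f (Y ω)) μ) :
    Summable fun k => μ.real (Y ⁻¹' {k}) * ‖f k‖ := by
  have h : Integrable f (μ.map Y) :=
    (integrable_map_measure (measurable_of_countable f).aestronglyMeasurable
      hY.aemeasurable).2 hf
  rw [← Measure.sum_smul_dirac (μ.map Y)] at h
  simpa [Measure.map_apply hY (measurableSet_singleton _), measureReal_def] using
    h.summable_of_dirac

theorem tsum_measureReal_preimage_singleton [IsProbabilityMeasure μ] (hY : Measurable Y) :
    ∑' k, μ.real (Y ⁻¹' {k}) = 1 := by
  have := Measure.isProbabilityMeasure_map (μ := μ) hY.aemeasurable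
  have h := integral_countable (μ := μ.map Y) (f := fun _ => (1 : ℝ)) (integrable_const 1)
  simpa [map_measureReal_apply hY (measurableSet_singleton _)] using h.symm

end Discrete

theorem summable_pow_mul_measureReal_preimage_mul_singleton {Ω : Type*} [MeasurableSpace Ω]
    {μ : Measure Ω} {Y : Ω → ℕ} {d : ℕ} {c : ℝ} (hd : 0 < d) (hY : Measurable Y)
    (hdvd : ∀ᵐ ω ∂μ, d ∣ Y ω) (hc : 0 ≤ c) (hint : Integrable (fun ω => c ^ Y ω) μ) :
    Summable fun j => (c ^ d) ^ j * μ.real (Y ⁻¹' {d * j}) := by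
  have h := summable_measureReal_preimage_singleton_mul_norm hY hint
  rw [← summable_comp_mul_left_iff_of_support_dvd hd fun k hk => by
    rw [measureReal_preimage_singleton_eq_zero_of_ae hdvd hk, zero_mul]] at h
  refine h.congr fun j => ?_
  rw [Real.norm_of_nonneg (by positivity), pow_mul, mul_comm]

theorem measureReal_add_eq_sum_range {Ω : Type*} [MeasurableSpace Ω] {μ : Measure Ω}
    [IsFiniteMeasure μ] {g Y : Ω → ℕ} (hg : Measurable g) (hY : Measurable Y)
    (hind : IndepFun g Y μ) (n : ℕ) :
    μ.real {ω | g ω + Y ω = n} =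
      ∑ k ∈ range (n + 1), μ.real (g ⁻¹' {n - k}) * μ.real (Y ⁻¹' {k}) := by
  have hset : {ω | g ω + Y ω = n} = ⋃ k ∈ range (n + 1), g ⁻¹' {n - k} ∩ Y ⁻¹' {k} := by
    ext ω
    simp only [Set.mem_ofPred_eq, Set.mem_iUnion, mem_range, Set.mem_inter_iff,
      Set.mem_preimage, Set.mem_singleton_iff]
    exact ⟨fun h => ⟨Y ω, by omega, by omega, rfl⟩, fun ⟨k, _, h1, h2⟩ => by omega⟩
  rw [hset, measureReal_biUnion_finset
    ((Set.pairwiseDisjoint_fiber Y _).mono_on fun _ _ => Set.inter_subset_right)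
    fun k _ => (hg (measurableSet_singleton _)).inter (hY (measurableSet_singleton _))]
  refine sum_congr rfl fun k _ => ?_
  simp only [measureReal_def, hind.measure_inter_preimage_eq_mul _ _ (measurableSet_singleton _)
    (measurableSet_singleton _), ENNReal.toReal_mul]

/-- If `g` is an `ℕ`-valued random variable whose density `p` is subexponential on the lattice
`dℕ` (i.e. `p ∈ 𝒮_d` with radius of convergence `1`), and `Y` is an `ℕ`-valued random variable
independent of `g`, a.s. divisible by `d`, with `𝔼[(1+δ)^Y] < ∞` for some `δ > 0`, then
`ℙ(g + Y = n) ∼ ℙ(g = n)` along multiples of `d`. -/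
theorem subexp_plus_light_tail_equivalence
    {Ω : Type*} [MeasurableSpace Ω] (μ : Measure Ω) [IsProbabilityMeasure μ]
    (d : ℕ) (p : ℕ → ℝ) (hp : SubexpClass d p 1)
    (g Y : Ω → ℕ) (hgmeas : Measurable g) (hYmeas : Measurable Y)
    (hdist : ∀ n, (μ {ω | g ω = n}).toReal = p n)
    (hindep : IndepFun g Y μ)
    (hdvd : ∀ᵐ ω ∂μ, d ∣ Y ω)
    (hexp : ∃ δ : ℝ, 0 < δ ∧ Integrable (fun ω => (1 + δ) ^ (Y ω)) μ) :
    Filter.Tendsto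
      (fun m => (μ {ω | g ω + Y ω = d * m}).toReal / p (d * m))
      Filter.atTop (nhds 1) := by
  obtain ⟨hd, -, hp_nonneg, -, ⟨N, hp_pos⟩, hp_sum, -, hp_ratio, -⟩ := hp
  obtain ⟨δ, hδ, hY_int⟩ := hexp
  have hY_lattice : ∀ k, ¬ d ∣ k → μ.real (Y ⁻¹' {k}) = 0 := fun k hk =>
    measureReal_preimage_singleton_eq_zero_of_ae hdvd hk
  have hpos : ∀ᶠ m in atTop, 0 < p (d * m) := by
    filter_upwards [eventually_ge_atTop N] with m hm
    exact hp_pos _ (hm.trans (Nat.le_mul_of_pos_left m hd)) (dvd_mul_right d m)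
  have hratio : Tendsto (fun m => p (d * m) / p (d * (m + 1))) atTop (𝓝 1) := by
    simpa [mul_add_one] using hp_ratio
  have hbdd : BddAbove (Set.range fun m => p (d * m)) :=
    ⟨∑' n, p n, Set.forall_mem_range.2 fun m =>
      (by simpa using hp_sum : Summable p).le_tsum _ fun n _ => hp_nonneg n⟩
  obtain ⟨C, hC, hdom⟩ := exists_le_mul_pow_of_tendsto_div_succ
    (one_lt_pow₀ (by linarith : 1 < 1 + δ) (by omega : d ≠ 0)) hbdd hpos hratio
  have hlim := tendsto_sum_range_mul_sub_div (fun n => hp_nonneg _)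
    (fun j => measureReal_nonneg) (by positivity) hC
    (summable_pow_mul_measureReal_preimage_mul_singleton hd hYmeas hdvd (by linarith) hY_int)
    (tendsto_div_sub_of_tendsto_div_succ hpos hratio) hdom
  rw [tsum_comp_mul_left_of_support_dvd hd hY_lattice,
    tsum_measureReal_preimage_singleton hYmeas] at hlim
  refine hlim.congr fun m => ?_
  have hdist' : ∀ n, μ.real (g ⁻¹' {n}) = p n := hdist
  rw [← measureReal_def, measureReal_add_eq_sum_range hgmeas hYmeas hindep,
    sum_range_mul_add_one_of_support_dvd hd fun k hk =>
      mul_eq_zero_of_right _ (hY_lattice k hk)]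
  simp_rw [← Nat.mul_sub, hdist']
end
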